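/- arXiv:1403.0476 — 3 statements merged into one kernel-verified Lean document; each statement's English description precedes it below -/
import Mathlib

section
/- Let Γ be a valued constraint language on a finite set D, let f ∈ Pol₁⁺(Γ) be a unary operation in the positive clone of Γ, and let I be an instance of VCSP(Γ). If s is an optimal assignment for I, then the assignment f ∘ s is also optimal. -/
/-! Basic framework for Valued Constraint Satisfaction Problems (VCSP):
operations, clones, weightings, weighted clones, cost functions,
(weighted/fractional) polymorphisms, expressibility and weighted relational clones. -/

/-- A `k`-ary operation on `D`. -/
abbrev Op (D : Type) (k : ℕ) : Type := (Fin k → D) → D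

/-- The `i`-th `k`-ary projection on `D`. -/
def proj (D : Type) {k : ℕ} (i : Fin k) : Op D k := fun x => x i

/-- An operation is a projection. -/
def IsProj {D : Type} {k : ℕ} (f : Op D k) : Prop := ∃ i : Fin k, f = proj D i

/-- Superposition `f[g₁,…,g_k]` of a `k`-ary operation with `k` many `l`-ary operations. -/
def superposeOp {D : Type} {k l : ℕ} (f : Op D k) (g : Fin k → Op D l) : Op D l :=
  fun x => f fun i => g i x

/-- A clone of operations on `D`: contains all projections and is closed under superposition. -/
structure IsClone {D : Type} (C : ∀ k, Set (Op D k)) : Prop where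
  proj_mem : ∀ (k : ℕ) (i : Fin k), proj D i ∈ C k
  superpose_mem : ∀ (k l : ℕ) (f : Op D k) (g : Fin k → Op D l),
    f ∈ C k → (∀ i, g i ∈ C l) → superposeOp f g ∈ C l

/-- A `k`-ary weighting of the clone `C`: a rational-valued function on `k`-ary operations,
vanishing outside `C`, summing to `0`, and negative only on projections. -/
structure IsWeighting {D : Type} [Fintype D] [DecidableEq D] (C : ∀ k, Set (Op D k))
    {k : ℕ} (ω : Op D k → ℚ) : Prop where
  support_mem : ∀ f : Op D k, ω f ≠ 0 → f ∈ C k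
  sum_zero : ∑ f : Op D k, ω f = 0
  neg_imp_proj : ∀ f : Op D k, ω f < 0 → IsProj f

/-- Superposition of a `k`-ary weighting with `k` many `l`-ary operations. -/
def wSuperpose {D : Type} [Fintype D] [DecidableEq D] {k l : ℕ}
    (ω : Op D k → ℚ) (g : Fin k → Op D l) : Op D l → ℚ :=
  fun f' => ∑ f ∈ Finset.univ.filter (fun f : Op D k => superposeOp f g = f'), ω f

/-- A weighted clone over the clone `C`: a nonempty family of weightings of `C` closed under
non-negative scaling, addition of weightings of equal arity and proper superposition. -/
structure IsWeightedClone {D : Type} [Fintype D] [DecidableEq D]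
    (C : ∀ k, Set (Op D k)) (W : ∀ k, Set (Op D k → ℚ)) : Prop where
  clone : IsClone C
  weighting : ∀ (k : ℕ), ∀ ω ∈ W k, IsWeighting C ω
  nonempty : ∃ k, (W k).Nonempty
  scale_mem : ∀ (k : ℕ) (c : ℚ), 0 ≤ c → ∀ ω ∈ W k, (fun f => c * ω f) ∈ W k
  add_mem : ∀ (k : ℕ), ∀ ω₁ ∈ W k, ∀ ω₂ ∈ W k, (fun f => ω₁ f + ω₂ f) ∈ W k
  superpose_mem : ∀ (k l : ℕ), ∀ ω ∈ W k, ∀ g : Fin k → Op D l,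
    (∀ i, g i ∈ C l) → IsWeighting C (wSuperpose ω g) → wSuperpose ω g ∈ W l

/-- The positive clone of a family of weightings: all projections together with all operations
receiving positive weight from some weighting in the family. -/
def posClone {D : Type} [Fintype D] [DecidableEq D] (W : ∀ k, Set (Op D k → ℚ)) :
    ∀ k, Set (Op D k) :=
  fun k => {f | IsProj f ∨ ∃ ω ∈ W k, 0 < ω f}

/-- An `r`-ary cost function on `D`, with values in `ℚ ∪ {∞}`. -/
abbrev CostF (D : Type) (r : ℕ) : Type := (Fin r → D) → WithTop ℚ

/-- The feasibility relation of a cost function. -/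
def Feas {D : Type} {r : ℕ} (ϱ : CostF D r) : Set (Fin r → D) := {x | ϱ x ≠ ⊤}

/-- Coordinate-wise application of a `k`-ary operation to `k` many `r`-tuples. -/
def appRows {D : Type} {k r : ℕ} (f : Op D k) (xs : Fin k → Fin r → D) : Fin r → D :=
  fun j => f fun i => xs i j

/-- `f` is a polymorphism of `ϱ`: `Feas ϱ` is closed under coordinate-wise application of `f`. -/
def IsPolymorphism {D : Type} {k r : ℕ} (f : Op D k) (ϱ : CostF D r) : Prop :=
  ∀ xs : Fin k → Fin r → D, (∀ i, xs i ∈ Feas ϱ) → appRows f xs ∈ Feas ϱ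

/-- A valued constraint language on `D`: a set of cost functions of various arities. -/
abbrev VLang (D : Type) : Type := Set (Σ r : ℕ, CostF D r)

/-- The clone of polymorphisms of a language. -/
def Pol {D : Type} (Γ : VLang D) : ∀ k, Set (Op D k) :=
  fun _ => {f | ∀ ϱ ∈ Γ, IsPolymorphism f ϱ.2}

/-- Multiplication of an element of `ℚ ∪ {∞}` by a rational scalar (`c·∞ = ∞`). -/
def qmul (c : ℚ) (x : WithTop ℚ) : WithTop ℚ := WithTop.map (fun q => c * q) x

/-- The sum `∑_f ω(f)·ϱ(f(x₁,…,x_k))`, over operations with non-zero weight. -/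
def wSum {D : Type} [Fintype D] [DecidableEq D] {k r : ℕ}
    (ω : Op D k → ℚ) (ϱ : CostF D r) (xs : Fin k → Fin r → D) : WithTop ℚ :=
  ∑ f ∈ Finset.univ.filter (fun f : Op D k => ω f ≠ 0), qmul (ω f) (ϱ (appRows f xs))

/-- `ω` is a weighted polymorphism of the language `Γ`. -/
def IsWeightedPolymorphism {D : Type} [Fintype D] [DecidableEq D] (Γ : VLang D)
    {k : ℕ} (ω : Op D k → ℚ) : Prop :=
  IsWeighting (Pol Γ) ω ∧
    ∀ ϱ ∈ Γ, ∀ xs : Fin k → Fin ϱ.1 → D, (∀ i, xs i ∈ Feas ϱ.2) → wSum ω ϱ.2 xs ≤ 0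

/-- The weighted polymorphisms of a language. -/
def wPol {D : Type} [Fintype D] [DecidableEq D] (Γ : VLang D) :
    ∀ k, Set (Op D k → ℚ) :=
  fun _ => {ω | IsWeightedPolymorphism Γ ω}

/-- The positive clone `Pol⁺(Γ)` of a language. -/
def PolPlus {D : Type} [Fintype D] [DecidableEq D] (Γ : VLang D) : ∀ k, Set (Op D k) :=
  posClone (wPol Γ)

/-- The map `D → D` induced by a unary operation. -/
def unaryFun {D : Type} (f : Op D 1) : D → D := fun x => f fun _ => x

/-- A language is a core if every unary operation in its positive clone is bijective. -/
def IsCore {D : Type} [Fintype D] [DecidableEq D] (Γ : VLang D) : Prop :=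
  ∀ f ∈ PolPlus Γ 1, Function.Bijective (unaryFun f)

/-- An idempotent operation. -/
def Idem {D : Type} {k : ℕ} (f : Op D k) : Prop := ∀ x : D, (f fun _ => x) = x

/-- A cyclic operation: `f(x₁,…,x_k) = f(x₂,…,x_k,x₁)`. -/
def CyclicOp {D : Type} {k : ℕ} (f : Op D k) : Prop :=
  ∀ x : Fin k → D, f x = f (x ∘ ⇑(finRotate k))

/-- A conservative operation. -/
def Conservative {D : Type} {k : ℕ} (f : Op D k) : Prop :=
  ∀ x : Fin k → D, ∃ i, f x = x i

/-- A Taylor operation. -/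
def IsTaylor {D : Type} {k : ℕ} (t : Op D k) : Prop :=
  Idem t ∧ ∀ j : Fin k, ∃ a b : Fin k → Fin 2, a j = 0 ∧ b j = 1 ∧
    ∀ u : Fin 2 → D, (t fun i => u (a i)) = t fun i => u (b i)

/-- An instance of `VCSP(Γ)` with variable set `V`: a finite multiset of constraints,
each a tuple of variables together with a cost function from `Γ`. -/
structure VInstance (D : Type) (Γ : VLang D) (V : Type) where
  cons : Multiset (Σ r : ℕ, (Fin r → V) × CostF D r)
  mem_lang : ∀ c ∈ cons, (⟨c.1, c.2.2⟩ : Σ r : ℕ, CostF D r) ∈ Γ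

/-- The cost of an assignment for a VCSP instance. -/
def VInstance.cost {D V : Type} {Γ : VLang D} (I : VInstance D Γ V) (s : V → D) :
    WithTop ℚ :=
  (I.cons.map fun c => c.2.2 fun i => s (c.2.1 i)).sum

/-- A cost function is expressible over a language `Δ`. -/
def Expressible {D : Type} [Fintype D] [DecidableEq D] (Δ : VLang D) {r : ℕ}
    (ϱ : CostF D r) : Prop :=
  ∃ (n : ℕ) (I : VInstance D Δ (Fin n)) (v : Fin r → Fin n),
    ∀ x : Fin r → D,
      ϱ x = (Finset.univ.filter fun s : Fin n → D => ∀ i, s (v i) = x i).inf fun s => I.cost s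

/-- A language is closed under expressibility, non-negative scaling and
addition of rational constants. -/
def IsWClosed {D : Type} [Fintype D] [DecidableEq D] (Δ : VLang D) : Prop :=
  (∀ (r : ℕ) (ϱ : CostF D r), Expressible Δ ϱ → (⟨r, ϱ⟩ : Σ r : ℕ, CostF D r) ∈ Δ) ∧
  (∀ (r : ℕ) (ϱ : CostF D r) (c : ℚ), 0 ≤ c → (⟨r, ϱ⟩ : Σ r : ℕ, CostF D r) ∈ Δ →
    (⟨r, fun x => qmul c (ϱ x)⟩ : Σ r : ℕ, CostF D r) ∈ Δ) ∧
  (∀ (r : ℕ) (ϱ : CostF D r) (c : ℚ), (⟨r, ϱ⟩ : Σ r : ℕ, CostF D r) ∈ Δ →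
    (⟨r, fun x => ϱ x + (c : WithTop ℚ)⟩ : Σ r : ℕ, CostF D r) ∈ Δ)

/-- The weighted relational clone generated by `Γ`: the smallest language containing `Γ`
closed under expressibility, non-negative scaling and addition of rational constants. -/
def wRelClo {D : Type} [Fintype D] [DecidableEq D] (Γ : VLang D) : VLang D :=
  ⋂₀ {Δ : VLang D | Γ ⊆ Δ ∧ IsWClosed Δ}

/-- The weighting `(1/k)(∑_i 1_{f_i} − ∑_i 1_{π_i})` associated with a `k`-tuple of
`k`-ary operations (a multimorphism), weights added with multiplicity. -/
def multimorphismW {D : Type} [Fintype D] [DecidableEq D] {k : ℕ} (F : Fin k → Op D k) :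
    Op D k → ℚ :=
  fun g => (1 / (k : ℚ)) *
    (((Finset.univ.filter fun i : Fin k => F i = g).card : ℚ) -
     ((Finset.univ.filter fun i : Fin k => proj D i = g).card : ℚ))

/-- `Γ` admits the multimorphism `⟨F 0, …, F (k-1)⟩`. -/
def AdmitsMultimorphism {D : Type} [Fintype D] [DecidableEq D] {k : ℕ}
    (Γ : VLang D) (F : Fin k → Op D k) : Prop :=
  multimorphismW F ∈ wPol Γ k

/-- An `m`-ary fractional operation: a probability distribution on `m`-ary operations. -/
def IsFracOp {D : Type} [Fintype D] [DecidableEq D] {m : ℕ} (ω : Op D m → ℝ) : Prop :=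
  (∀ f, 0 ≤ ω f) ∧ ∑ f : Op D m, ω f = 1

/-- Multiplication of an element of `ℚ ∪ {∞}` by a real scalar, landing in `ℝ ∪ {∞}`. -/
def rmul (c : ℝ) (x : WithTop ℚ) : WithTop ℝ := WithTop.map (fun q : ℚ => c * (q : ℝ)) x

/-- `ω` is a fractional polymorphism of the language `Γ`. -/
def IsFracPolymorphism {D : Type} [Fintype D] [DecidableEq D] (Γ : VLang D) {m : ℕ}
    (ω : Op D m → ℝ) : Prop :=
  IsFracOp ω ∧ ∀ ϱ ∈ Γ, ∀ xs : Fin m → Fin ϱ.1 → D, (∀ i, xs i ∈ Feas ϱ.2) →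
    (∑ g ∈ Finset.univ.filter fun g : Op D m => 0 < ω g, rmul (ω g) (ϱ.2 (appRows g xs)))
      ≤ rmul (1 / (m : ℝ)) (∑ i : Fin m, ϱ.2 (xs i))

/-- The positive clone `fPol⁺(Γ)` defined via fractional polymorphisms. -/
def fPolPlus {D : Type} [Fintype D] [DecidableEq D] (Γ : VLang D) : ∀ k, Set (Op D k) :=
  fun k => {f | IsProj f ∨ ∃ ω : Op D k → ℝ, IsFracPolymorphism Γ ω ∧ 0 < ω f}

/-- Application of a binary operation to two elements. -/
def ap2 {D : Type} (f : Op D 2) (a b : D) : D := f ![a, b]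

/-- Application of a ternary operation to three elements. -/
def ap3 {D : Type} (f : Op D 3) (a b c : D) : D := f ![a, b, c]

/-- A ternary operation restricts to a majority operation on a subset `S`. -/
def IsMajorityOn {D : Type} (f : Op D 3) (S : Set D) : Prop :=
  ∀ x ∈ S, ∀ y ∈ S, ap3 f x x y = x ∧ ap3 f x y x = x ∧ ap3 f y x x = x

/-- A ternary operation restricts to a minority operation on a subset `S`. -/
def IsMinorityOn {D : Type} (f : Op D 3) (S : Set D) : Prop :=
  ∀ x ∈ S, ∀ y ∈ S, ap3 f x x y = y ∧ ap3 f x y x = y ∧ ap3 f y x x = y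

/-- The language `Γ_c`: `Γ` together with all unary cost functions `N_a`
(`N_a(a) = 0`, `N_a(x) = ∞` for `x ≠ a`). -/
def withConstants {D : Type} [DecidableEq D] (Γ : VLang D) : VLang D :=
  Γ ∪ {p : Σ r : ℕ, CostF D r |
        ∃ a : D, p = ⟨1, fun x => if x 0 = a then (0 : WithTop ℚ) else ⊤⟩}

/-- A language is conservative if it contains every `{0,1}`-valued unary cost function. -/
def ConservativeLang {D : Type} (Γ : VLang D) : Prop :=
  ∀ ϱ : CostF D 1, (∀ x, ϱ x = 0 ∨ ϱ x = 1) → (⟨1, ϱ⟩ : Σ r : ℕ, CostF D r) ∈ Γ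

/-- The coordinate-wise action of a `k`-ary operation on `A` on the power `A^n`. -/
def opPow {A : Type} (n : ℕ) {k : ℕ} (f : Op A k) : Op (Fin n → A) k :=
  fun xs c => f fun i => xs i c

/-- Regrouping an `(n·r)`-tuple over `A` into an `r`-tuple of elements of `A^n`. -/
def regroup (A : Type) (n r : ℕ) (y : Fin (n * r) → A) : Fin r → Fin n → A :=
  fun j c => y (finProdFinEquiv (c, j))

/-! Let `ω ∈ wPol(Γ)` give `f` positive weight and let `s` be optimal of finite cost (if the
optimum is `∞` there is nothing to prove). The operations in `supp ω` are polymorphisms, so every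
`g ∘ s` with `ω(g) ≠ 0` is feasible, and summing the weighted-polymorphism inequalities over the
constraints of `I` gives `∑_g ω(g) Cost(g ∘ s) ≤ 0`. Since `ω` sums to `0` and is negative only on
the identity, this reads `∑_g ω(g) (Cost(g ∘ s) - Cost(s)) ≤ 0`, a sum of terms that are
non-negative by optimality of `s`. Hence each term vanishes, and `Cost(f ∘ s) = Cost(s)`. -/

theorem Multiset.sum_map_ne_top_iff {α M : Type} [AddCommMonoid M] {m : Multiset α}
    {F : α → WithTop M} : (m.map F).sum ≠ ⊤ ↔ ∀ a ∈ m, F a ≠ ⊤ := by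
  induction m using Multiset.induction_on with
  | empty => simp
  | cons a m ih => simp [ih]

theorem Multiset.sum_map_eq_coe_untop₀ {α M : Type} [AddCommMonoid M] {m : Multiset α}
    {F : α → WithTop M} (h : ∀ a ∈ m, F a ≠ ⊤) :
    (m.map F).sum = ↑(m.map fun a => (F a).untop₀).sum := by
  rw [← WithTop.coe_addHom, map_multiset_sum, Multiset.map_map]
  exact congrArg Multiset.sum
    (Multiset.map_congr rfl fun a ha => (WithTop.coe_untop₀_of_ne_top (h a ha)).symm)

theorem wSum_eq_coe {D : Type} [Fintype D] [DecidableEq D] {k r : ℕ} {ω : Op D k → ℚ}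
    {ϱ : CostF D r} {xs : Fin k → Fin r → D}
    (h : ∀ g, ω g ≠ 0 → appRows g xs ∈ Feas ϱ) :
    wSum ω ϱ xs = ↑(∑ g ∈ Finset.univ.filter (ω · ≠ 0), ω g * (ϱ (appRows g xs)).untop₀) := by
  rw [wSum, WithTop.coe_sum]
  refine Finset.sum_congr rfl fun g hg => ?_
  lift ϱ (appRows g xs) to ℚ using h g (Finset.mem_filter.mp hg).2 with q
  rfl

theorem eq_of_sum_mul_nonpos {ι 𝕜 : Type} [CommRing 𝕜] [LinearOrder 𝕜] [IsStrictOrderedRing 𝕜]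
    {S : Finset ι} {ω Q : ι → 𝕜} {q : 𝕜} (hω : ∑ i ∈ S, ω i = 0)
    (hsum : ∑ i ∈ S, ω i * Q i ≤ 0) (hneg : ∀ i ∈ S, ω i < 0 → Q i = q)
    (hle : ∀ i ∈ S, 0 < ω i → q ≤ Q i) {i : ι} (hi : i ∈ S) (hpos : 0 < ω i) : Q i = q := by
  have hterm : ∀ j ∈ S, 0 ≤ ω j * (Q j - q) := fun j hj => by
    rcases lt_or_ge (ω j) 0 with hj' | hj'
    · simp [hneg j hj hj']
    · rcases hj'.eq_or_lt with h0 | h0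
      · simp [← h0]
      · exact mul_nonneg h0.le (sub_nonneg.2 (hle j hj h0))
  -- since `∑ ω = 0`, the non-negative terms `ω j * (Q j - q)` add up to `∑ ω j * Q j ≤ 0`
  have htotal : ∑ j ∈ S, ω j * (Q j - q) = ∑ j ∈ S, ω j * Q j := by
    simp only [mul_sub, Finset.sum_sub_distrib, ← Finset.sum_mul, hω, zero_mul, sub_zero]
  have hzero := (Finset.sum_eq_zero_iff_of_nonneg hterm).1
    (le_antisymm (htotal ▸ hsum) (Finset.sum_nonneg hterm)) i hi
  exact sub_eq_zero.1 ((mul_eq_zero.1 hzero).resolve_left hpos.ne')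

namespace VInstance

variable {D V : Type} {Γ : VLang D} (I : VInstance D Γ V)

def Feasible (t : V → D) : Prop := ∀ c ∈ I.cons, (fun i => t (c.2.1 i)) ∈ Feas c.2.2

/-- `I.cost` with infinite constraint values counted as `0`. -/
def ratCost (t : V → D) : ℚ := (I.cons.map fun c => (c.2.2 fun i => t (c.2.1 i)).untop₀).sum

theorem cost_ne_top_iff {t : V → D} : I.cost t ≠ ⊤ ↔ I.Feasible t :=
  Multiset.sum_map_ne_top_iff

theorem cost_eq_ratCost {t : V → D} (ht : I.Feasible t) : I.cost t = I.ratCost t :=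
  Multiset.sum_map_eq_coe_untop₀ ht

theorem feasible_superpose {k : ℕ} {g : Op D k} (hg : g ∈ Pol Γ k) {ts : Fin k → V → D}
    (hts : ∀ i, I.Feasible (ts i)) : I.Feasible fun v => g fun i => ts i v :=
  fun c hc => hg _ (I.mem_lang c hc) (fun i j => ts i (c.2.1 j)) fun i => hts i c hc

theorem sum_mul_ratCost_nonpos [Fintype D] [DecidableEq D] {k : ℕ} {ω : Op D k → ℚ}
    (hω : ω ∈ wPol Γ k) {ts : Fin k → V → D} (hts : ∀ i, I.Feasible (ts i)) :
    ∑ g ∈ Finset.univ.filter (ω · ≠ 0), ω g * I.ratCost (fun v => g fun i => ts i v) ≤ 0 := by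
  simp only [ratCost, ← Multiset.sum_map_mul_left, ← Multiset.sum_map_sum]
  refine Multiset.sum_induction (· ≤ 0) _ (fun _ _ => add_nonpos) le_rfl ?_
  simp only [Multiset.mem_map]
  rintro _ ⟨c, hc, rfl⟩
  have hfeas := fun g hg => I.feasible_superpose (hω.1.support_mem g hg) hts c hc
  exact_mod_cast (wSum_eq_coe hfeas) ▸ hω.2 _ (I.mem_lang c hc) _ fun i => hts i c hc

theorem cost_comp_eq_of_optimal [Fintype D] [DecidableEq D] {ω : Op D 1 → ℚ}
    (hω : ω ∈ wPol Γ 1) {s : V → D} (hs : ∀ s' : V → D, I.cost s ≤ I.cost s')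
    {g : Op D 1} (hg : 0 < ω g) : I.cost (fun v => unaryFun g (s v)) = I.cost s := by
  by_cases htop : I.cost s = ⊤
  · rw [htop, ← top_le_iff, ← htop]
    exact hs _
  have hfeas : I.Feasible s := (I.cost_ne_top_iff).1 htop
  have hcomp_feas : ∀ {h : Op D 1}, ω h ≠ 0 → I.Feasible fun v => unaryFun h (s v) :=
    fun hh => I.feasible_superpose (hω.1.support_mem _ hh) fun _ => hfeas
  rw [I.cost_eq_ratCost hfeas, I.cost_eq_ratCost (hcomp_feas hg.ne')]
  congr 1
  refine eq_of_sum_mul_nonpos (S := Finset.univ.filter (ω · ≠ 0))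
    (Q := fun h => I.ratCost fun v => unaryFun h (s v))
    ?_ (I.sum_mul_ratCost_nonpos hω fun _ => hfeas) ?_ ?_ (by simp [hg.ne']) hg
  · rw [Finset.sum_filter_ne_zero]; exact hω.1.sum_zero
  · -- the only unary projection is the identity
    intro h _ hneg
    obtain ⟨i, rfl⟩ := hω.1.neg_imp_proj h hneg
    rfl
  · intro h _ hpos
    have := hs fun v => unaryFun h (s v)
    rwa [I.cost_eq_ratCost hfeas, I.cost_eq_ratCost (hcomp_feas hpos.ne'), WithTop.coe_le_coe] at this

end VInstance

theorem optimal_comp_pos_unary_general {D : Type} [Fintype D] [DecidableEq D]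
    (Γ : VLang D) (f : Op D 1) (hf : f ∈ PolPlus Γ 1)
    {V : Type} (I : VInstance D Γ V) (s : V → D)
    (hs : ∀ s' : V → D, I.cost s ≤ I.cost s') :
    ∀ s' : V → D, I.cost (fun v => unaryFun f (s v)) ≤ I.cost s' := by
  rcases hf with ⟨i, rfl⟩ | ⟨ω, hω, hωf⟩
  · exact hs
  · rw [I.cost_comp_eq_of_optimal hω hs hωf]
    exact hs

/-- If `f ∈ Pol₁⁺(Γ)` and `s` is an optimal assignment of a VCSP(Γ)
instance, then `f ∘ s` is also optimal. -/
theorem optimal_comp_pos_unary {D : Type} [Fintype D] [DecidableEq D] [Nonempty D]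
    (Γ : VLang D) (f : Op D 1) (hf : f ∈ PolPlus Γ 1)
    {V : Type} [Fintype V] (I : VInstance D Γ V) (s : V → D)
    (hs : ∀ s' : V → D, I.cost s ≤ I.cost s') :
    ∀ s' : V → D, I.cost (fun v => unaryFun f (s v)) ≤ I.cost s' :=
  optimal_comp_pos_unary_general Γ f hf I s hs
end

section
/- Let Γ be a finite core valued constraint language over a finite set D, and fix for each m an enumeration of D^m so that every m-ary operation on D is identified with a |D^m|-tuple over D. For every m there exists a cost function ϱ of arity |D^m| (viewed as ϱ : O_D^(m) → ℚ ∪ {∞}) belonging to wRelClo(Γ), and a rational number P, such that for every m-ary operation f on D: (1) ϱ(f) ≥ P; (2) ϱ(f) < ∞ if and only if f ∈ Pol_m(Γ); (3) ϱ(f) = P if and only if f ∈ Pol⁺(Γ). -/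
/-!
Let `A` be the matrix whose rows are the constraints of the indicator problem of order `m`
(a cost function `ϱ ∈ Γ` together with `m` feasible tuples `x₁, …, x_m`) and whose entry at an
`m`-ary polymorphism `f` is `ϱ(f(x₁, …, x_m))`. Weighted polymorphisms of arity `m` are exactly
the points of the polyhedral cone of weightings `ω` of `Pol_m(Γ)` with `A ω ≤ 0`, so `Pol⁺_m(Γ)`
consists of the projections and the operations in the positive support of this cone. By Farkas'
lemma there are weights `y ≥ 0` on the constraints and a value `μ` such that `y A` equals `μ` at
projections, is at least `μ` on `Pol_m(Γ)` and exceeds `μ` at every polymorphism outside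
`Pol⁺_m(Γ)`; by complementary slackness it equals `μ` on `Pol⁺_m(Γ)`. The indicator instance with
constraints scaled by `y` expresses the required cost function: scaling by `y s ≥ 0` keeps infinite
costs infinite, so its cost is finite exactly on `Pol_m(Γ)`, where it equals `y A`.
-/

open Matrix Finset

section Farkas

variable {𝕜 α κ : Type*}

theorem eq_zero_of_forall_dotProduct_nonneg [Field 𝕜] [LinearOrder 𝕜] [IsStrictOrderedRing 𝕜]
    [Fintype α] {c : α → 𝕜} (h : ∀ x, 0 ≤ c ⬝ᵥ x) : c = 0 := by
  have hc : 0 ≤ -(c ⬝ᵥ c) := by simpa only [dotProduct_neg] using h (-c)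
  exact dotProduct_self_eq_zero.1
    (le_antisymm (neg_nonneg.1 hc) (sum_nonneg fun i _ => mul_self_nonneg (c i)))

theorem add_smul_dotProduct_eq_dotProduct_add_smul [CommRing 𝕜] [Fintype α] (v w x z : α → 𝕜) :
    (v + (v ⬝ᵥ z) • w) ⬝ᵥ x = v ⬝ᵥ (x + (w ⬝ᵥ x) • z) := by
  simp only [add_dotProduct, dotProduct_add, smul_dotProduct, dotProduct_smul, smul_eq_mul]
  rw [dotProduct_comm w x]
  ring

theorem exists_nonneg_sum_insert [Semiring 𝕜] [PartialOrder 𝕜] [DecidableEq κ] {s : Finset κ}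
    {a : κ} (ha : a ∉ s) (A : κ → α → 𝕜) {u : κ → 𝕜} (hu : 0 ≤ u) {t : 𝕜} (ht : 0 ≤ t) :
    ∃ u' : κ → 𝕜, 0 ≤ u' ∧ ∑ k ∈ insert a s, u' k • A k = t • A a + ∑ k ∈ s, u k • A k := by
  refine ⟨Function.update u a t, fun k => ?_, ?_⟩
  · rcases eq_or_ne k a with rfl | hk
    · simpa using ht
    · simpa [Function.update_of_ne hk] using hu k
  · rw [sum_insert ha, Function.update_self]
    congr 1
    exact sum_congr rfl fun k hk => by rw [Function.update_of_ne (ne_of_mem_of_not_mem hk ha)]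

theorem exists_dotProduct_eq_neg_one [Field 𝕜] [LinearOrder 𝕜] [IsStrictOrderedRing 𝕜]
    [Fintype α] [DecidableEq κ] {s : Finset κ} {a : κ} {A : κ → α → 𝕜} {c : α → 𝕜}
    (h : ∀ x, (∀ k ∈ insert a s, 0 ≤ A k ⬝ᵥ x) → 0 ≤ c ⬝ᵥ x)
    (hs : ¬∀ x, (∀ k ∈ s, 0 ≤ A k ⬝ᵥ x) → 0 ≤ c ⬝ᵥ x) :
    ∃ z, A a ⬝ᵥ z = -1 ∧ (∀ k ∈ s, 0 ≤ A k ⬝ᵥ z) ∧ c ⬝ᵥ z ≤ 0 := by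
  push Not at hs
  obtain ⟨x₀, hx₀, hcx₀⟩ := hs
  have hd : A a ⬝ᵥ x₀ < 0 := by
    by_contra! hd
    exact (h x₀ (by simpa [hd] using hx₀)).not_gt hcx₀
  have hscale : 0 ≤ (-(A a ⬝ᵥ x₀))⁻¹ := inv_nonneg.2 (neg_nonneg.2 hd.le)
  refine ⟨(-(A a ⬝ᵥ x₀))⁻¹ • x₀, ?_, fun k hk => ?_, ?_⟩
  · rw [dotProduct_smul, smul_eq_mul]
    field_simp [hd.ne]
  · simpa only [dotProduct_smul, smul_eq_mul] using mul_nonneg hscale (hx₀ k hk)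
  · simpa only [dotProduct_smul, smul_eq_mul] using mul_nonpos_of_nonneg_of_nonpos hscale hcx₀.le

theorem exists_nonneg_sum_smul_eq_of_dotProduct_nonneg [Field 𝕜] [LinearOrder 𝕜]
    [IsStrictOrderedRing 𝕜] [Fintype α] [DecidableEq κ] (s : Finset κ)
    (A : κ → α → 𝕜) (c : α → 𝕜) (h : ∀ x, (∀ k ∈ s, 0 ≤ A k ⬝ᵥ x) → 0 ≤ c ⬝ᵥ x) :
    ∃ u : κ → 𝕜, 0 ≤ u ∧ c = ∑ k ∈ s, u k • A k := by
  induction s using Finset.induction_on generalizing A c with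
  | empty =>
    exact ⟨0, le_rfl, by simpa using eq_zero_of_forall_dotProduct_nonneg (by simpa using h)⟩
  | @insert a s ha ih =>
    by_cases hs : ∀ x, (∀ k ∈ s, 0 ≤ A k ⬝ᵥ x) → 0 ≤ c ⬝ᵥ x
    · obtain ⟨u, hu, rfl⟩ := ih A c hs
      obtain ⟨u', hu', hsum⟩ := exists_nonneg_sum_insert ha A hu le_rfl
      exact ⟨u', hu', by rw [hsum, zero_smul, zero_add]⟩
    obtain ⟨z, hz, hAz, hcz⟩ := exists_dotProduct_eq_neg_one h hs
    -- `v ↦ v + (v ⬝ᵥ z) • A a` kills `A a`, and its adjoint `x ↦ x + (A a ⬝ᵥ x) • z` maps into the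
    -- hyperplane `A a ⬝ᵥ x = 0`, so the induction hypothesis applies to the projected system.
    obtain ⟨u, hu, hcu⟩ := ih (fun k => A k + (A k ⬝ᵥ z) • A a) (c + (c ⬝ᵥ z) • A a) fun x hx => by
      rw [add_smul_dotProduct_eq_dotProduct_add_smul]
      refine h _ fun k hk => ?_
      rcases mem_insert.1 hk with rfl | hk
      · simp [dotProduct_add, dotProduct_smul, hz]
      · simpa only [add_smul_dotProduct_eq_dotProduct_add_smul] using hx k hk
    obtain ⟨u', hu', hsum⟩ := exists_nonneg_sum_insert ha A hu
      (t := ∑ k ∈ s, u k * (A k ⬝ᵥ z) - c ⬝ᵥ z)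
      (sub_nonneg.2 (hcz.trans (sum_nonneg fun k hk => mul_nonneg (hu k) (hAz k hk))))
    refine ⟨u', hu', ?_⟩
    rw [hsum, sub_smul, sum_smul]
    simp only [smul_add, sum_add_distrib, smul_smul] at hcu
    rw [← sub_eq_iff_eq_add.2 hcu]
    abel

theorem exists_nonneg_combination_of_dotProduct_nonneg [Field 𝕜] [LinearOrder 𝕜]
    [IsStrictOrderedRing 𝕜] [Fintype α] {ι : Type*} [Fintype ι] [Fintype κ]
    (A : ι → α → 𝕜) (B : κ → α → 𝕜) (c : α → 𝕜)
    (h : ∀ x, (∀ i, 0 ≤ A i ⬝ᵥ x) → (∀ j, B j ⬝ᵥ x = 0) → 0 ≤ c ⬝ᵥ x) :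
    ∃ u : ι → 𝕜, 0 ≤ u ∧ ∃ v : κ → 𝕜, c = ∑ i, u i • A i + ∑ j, v j • B j := by
  classical
  obtain ⟨w, hw, hc⟩ := exists_nonneg_sum_smul_eq_of_dotProduct_nonneg univ
    (Sum.elim A (Sum.elim B (-B))) c fun x hx => h x (fun i => hx (.inl i) (mem_univ _))
      fun j => le_antisymm (by simpa using hx (.inr (.inr j)) (mem_univ _))
        (hx (.inr (.inl j)) (mem_univ _))
  refine ⟨fun i => w (.inl i), fun i => hw _, fun j => w (.inr (.inl j)) - w (.inr (.inr j)), ?_⟩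
  simp only [hc, Fintype.sum_sum_type, Sum.elim_inl, Sum.elim_inr, Pi.neg_apply, smul_neg,
    sum_neg_distrib, sub_smul, sum_sub_distrib]
  abel

end Farkas

section WeightingCone

variable {𝕜 α κ : Type*} [Fintype α]

def weightingCone [Ring 𝕜] [PartialOrder 𝕜] (F J : Set α) (A : Matrix κ α 𝕜) : Set (α → 𝕜) :=
  {x | (∀ a ∉ F, x a = 0) ∧ (∀ a ∉ J, 0 ≤ x a) ∧ ∑ a, x a = 0 ∧ A *ᵥ x ≤ 0}

variable [Fintype κ] [Field 𝕜] [LinearOrder 𝕜] [IsStrictOrderedRing 𝕜] {F J : Set α}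
  {A : Matrix κ α 𝕜}

-- Complementary slackness: `∑ b, x b * ((y ᵥ* A) b - μ)` is a sum of nonnegative terms equal to
-- `y ⬝ᵥ (A *ᵥ x) ≤ 0`.
theorem vecMul_eq_of_mem_weightingCone {y : κ → 𝕜} {μ : 𝕜} (hy : 0 ≤ y)
    (hJ : ∀ a ∈ J, (y ᵥ* A) a = μ) (hF : ∀ a ∈ F, μ ≤ (y ᵥ* A) a)
    {x : α → 𝕜} (hx : x ∈ weightingCone F J A) {a : α} (hxa : 0 < x a) : (y ᵥ* A) a = μ := by
  obtain ⟨hxF, hxJ, hsum, hAx⟩ := hx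
  have hterm : ∀ b, 0 ≤ x b * ((y ᵥ* A) b - μ) := fun b => by
    by_cases hbJ : b ∈ J
    · simp [hJ b hbJ]
    by_cases hbF : b ∈ F
    · exact mul_nonneg (hxJ b hbJ) (sub_nonneg.2 (hF b hbF))
    · simp [hxF b hbF]
  have htotal : ∑ b, x b * ((y ᵥ* A) b - μ) = y ⬝ᵥ (A *ᵥ x) := by
    simp only [mul_sub, sum_sub_distrib, ← sum_mul, hsum, zero_mul, sub_zero]
    rw [dotProduct_mulVec, dotProduct_comm]
    rfl
  have hzero := (sum_eq_zero_iff_of_nonneg fun b _ => hterm b).1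
    (le_antisymm (htotal ▸ sum_nonpos fun k _ => mul_nonpos_of_nonneg_of_nonpos (hy k) (hAx k))
      (sum_nonneg fun b _ => hterm b)) a (mem_univ a)
  exact sub_eq_zero.1 ((mul_eq_zero.1 hzero).resolve_left hxa.ne')

-- Farkas' lemma for the system defining `weightingCone F J A`, with objective `-B.indicator 1`.
theorem exists_vecMul_eq_add_indicator (B : Set α)
    (hB : ∀ x ∈ weightingCone F J A, ∀ b ∈ B, x b ≤ 0) :
    ∃ y : κ → 𝕜, 0 ≤ y ∧ ∃ μ : 𝕜, ∃ p : α → 𝕜, (∀ a, 0 ≤ p a) ∧ (∀ a ∈ J, p a = 0) ∧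
      ∀ a ∈ F, (y ᵥ* A) a = μ + p a + B.indicator 1 a := by
  classical
  obtain ⟨u, hu, v, hc⟩ := exists_nonneg_combination_of_dotProduct_nonneg
    (Sum.elim (fun k => -A k) fun a : {a // a ∉ J} => Pi.single a.1 1)
    (Sum.elim (fun a : {a // a ∉ F} => Pi.single a.1 1) fun _ : Unit => 1)
    (-B.indicator 1) fun x hx hx' => by
      have hxW : x ∈ weightingCone F J A :=
        ⟨fun a ha => by simpa using hx' (.inl ⟨a, ha⟩),
          fun a ha => by simpa using hx (.inr ⟨a, ha⟩),
          by simpa [dotProduct] using hx' (.inr ()),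
          fun k => by simpa [mulVec] using hx (.inl k)⟩
      rw [neg_dotProduct, neg_nonneg]
      refine sum_nonpos fun a _ => ?_
      by_cases ha : a ∈ B
      · simpa [ha] using hB x hxW a ha
      · simp [ha]
  refine ⟨fun k => u (.inl k), fun k => hu _, v (.inr ()),
    fun a => ∑ b : {b // b ∉ J}, u (.inr b) * (Pi.single b.1 1 : α → 𝕜) a,
    fun a => ?_, fun a ha => ?_, fun a ha => ?_⟩
  · exact sum_nonneg fun b _ => mul_nonneg (hu _) (by rw [Pi.single_apply]; split_ifs <;> simp)
  · exact sum_eq_zero fun b _ => by rw [Pi.single_eq_of_ne (ne_of_mem_of_not_mem ha b.2), mul_zero]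
  · have hca := congrFun hc a
    have hinfeasible : ∑ b : {b // b ∉ F}, v (.inl b) * (Pi.single b.1 1 : α → 𝕜) a = 0 :=
      sum_eq_zero fun b _ => by rw [Pi.single_eq_of_ne (ne_of_mem_of_not_mem ha b.2), mul_zero]
    simp only [Fintype.sum_sum_type, Sum.elim_inl, Sum.elim_inr, Pi.add_apply, Finset.sum_apply,
      Pi.smul_apply, Pi.neg_apply, Pi.one_apply, smul_eq_mul, mul_neg, mul_one, sum_neg_distrib,
      Fintype.sum_unique, hinfeasible] at hca
    simp only [vecMul, dotProduct]
    linarith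

theorem exists_dual_of_weightingCone (hJF : J ⊆ F) :
    ∃ y : κ → 𝕜, 0 ≤ y ∧ ∃ μ : 𝕜, ∀ a ∈ F, μ ≤ (y ᵥ* A) a ∧
      ((y ᵥ* A) a = μ ↔ a ∈ J ∨ ∃ x ∈ weightingCone F J A, 0 < x a) := by
  set B := {a | a ∉ J ∧ ∀ x ∈ weightingCone F J A, x a ≤ 0}
  obtain ⟨y, hy, μ, p, hp, hpJ, hV⟩ := exists_vecMul_eq_add_indicator B fun x hx b hb => hb.2 x hx
  have hF : ∀ a ∈ F, μ ≤ (y ᵥ* A) a := fun a ha => by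
    rw [hV a ha]
    linarith [hp a, Set.indicator_nonneg (s := B) (f := (1 : α → 𝕜)) (fun _ _ => zero_le_one) a]
  have hJ : ∀ a ∈ J, (y ᵥ* A) a = μ := fun a ha => by
    rw [hV a (hJF ha), hpJ a ha, Set.indicator_of_notMem fun h => h.1 ha, add_zero, add_zero]
  refine ⟨y, hy, μ, fun a ha => ⟨hF a ha, fun hVa => ?_, ?_⟩⟩
  · by_contra! hpos
    rw [hV a ha, Set.indicator_of_mem (show a ∈ B from hpos), Pi.one_apply] at hVa
    linarith [hp a]
  · rintro (haJ | ⟨x, hx, hxa⟩)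
    · exact hJ a haJ
    · exact vecMul_eq_of_mem_weightingCone hy hJ hF hx hxa

end WeightingCone

section WRelClo

variable {D : Type} [Fintype D] [DecidableEq D]

theorem Expressible.mono {Δ Δ' : VLang D} (hΔ : Δ ⊆ Δ') {r : ℕ} {ϱ : CostF D r}
    (h : Expressible Δ ϱ) : Expressible Δ' ϱ := by
  obtain ⟨n, I, v, hI⟩ := h
  exact ⟨n, ⟨I.cons, fun c hc => hΔ (I.mem_lang c hc)⟩, v, hI⟩

theorem VInstance.expressible_cost {Δ : VLang D} {r : ℕ} (I : VInstance D Δ (Fin r)) :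
    Expressible Δ I.cost := by
  refine ⟨r, I, id, fun x => ?_⟩
  have hx : (univ.filter fun s : Fin r → D => ∀ i, s (id i) = x i) = {x} := by
    ext s
    simp [funext_iff]
  rw [hx, inf_singleton]

theorem mem_wRelClo_of_expressible {Γ : VLang D} {r : ℕ} {ϱ : CostF D r}
    (h : Expressible (wRelClo Γ) ϱ) : (⟨r, ϱ⟩ : Σ r : ℕ, CostF D r) ∈ wRelClo Γ :=
  Set.mem_sInter.2 fun _ hΔ => hΔ.2.1 r ϱ (h.mono fun _ hp => Set.mem_sInter.1 hp _ hΔ)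

theorem qmul_mem_wRelClo {Γ : VLang D} {r : ℕ} {ϱ : CostF D r}
    (hϱ : (⟨r, ϱ⟩ : Σ r : ℕ, CostF D r) ∈ Γ) {c : ℚ} (hc : 0 ≤ c) :
    (⟨r, fun x => qmul c (ϱ x)⟩ : Σ r : ℕ, CostF D r) ∈ wRelClo Γ :=
  Set.mem_sInter.2 fun _ hΔ => hΔ.2.2.1 r ϱ c hc (hΔ.1 hϱ)

end WRelClo

theorem proj_mem_Pol {D : Type} {Γ : VLang D} {m : ℕ} (i : Fin m) : proj D i ∈ Pol Γ m :=
  fun _ _ _ hxs => hxs i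

abbrev IndicatorConstraint (D : Type) (m : ℕ) : Type :=
  Σ ϱ : (Σ r : ℕ, CostF D r), Fin m → Fin ϱ.1 → D

section Indicator

variable {D : Type} [Fintype D]

open Classical in
/-- The constraints of the indicator problem of order `m`: a cost function `ϱ ∈ Γ` together with
`m` feasible tuples of `ϱ`, whose columns form the scope. -/
noncomputable def indicatorConstraints (Γ : VLang D) (hfin : Γ.Finite) (m : ℕ) :
    Finset (IndicatorConstraint D m) :=
  hfin.toFinset.sigma fun ϱ => univ.filter fun xs => ∀ i, xs i ∈ Feas ϱ.2

variable {Γ : VLang D} {hfin : Γ.Finite} {m : ℕ}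

theorem mem_indicatorConstraints {s : IndicatorConstraint D m} :
    s ∈ indicatorConstraints Γ hfin m ↔ s.1 ∈ Γ ∧ ∀ i, s.2 i ∈ Feas s.1.2 := by
  simp [indicatorConstraints]

variable (Γ hfin m) in
/-- Entries are `ϱ(f(x₁, …, x_m))`, with junk value `0` where this is infinite, which happens only
for `f ∉ Pol Γ m`. -/
noncomputable def indicatorMatrix : Matrix (indicatorConstraints Γ hfin m) (Op D m) ℚ :=
  fun s f => (s.1.1.2 (appRows f s.1.2)).untopD 0

theorem indicatorMatrix_coe {f : Op D m} (hf : f ∈ Pol Γ m) (s : indicatorConstraints Γ hfin m) :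
    s.1.1.2 (appRows f s.1.2) = (indicatorMatrix Γ hfin m s f : WithTop ℚ) := by
  obtain ⟨hΓ, hxs⟩ := mem_indicatorConstraints.1 s.2
  obtain ⟨q, hq⟩ := WithTop.ne_top_iff_exists.1 (hf _ hΓ _ hxs)
  rw [indicatorMatrix, ← hq, WithTop.untopD_coe]

theorem wSum_eq_mulVec [DecidableEq D] {ω : Op D m → ℚ} (hω : ∀ f, ω f ≠ 0 → f ∈ Pol Γ m)
    (s : indicatorConstraints Γ hfin m) :
    wSum ω s.1.1.2 s.1.2 = ((indicatorMatrix Γ hfin m *ᵥ ω) s : WithTop ℚ) := by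
  have hfilter : ∑ f, indicatorMatrix Γ hfin m s f * ω f =
      ∑ f ∈ univ.filter (ω · ≠ 0), indicatorMatrix Γ hfin m s f * ω f :=
    (sum_filter_of_ne fun f _ h => right_ne_zero_of_mul h).symm
  rw [wSum, mulVec, dotProduct, hfilter, WithTop.coe_sum]
  refine sum_congr rfl fun f hf => ?_
  rw [indicatorMatrix_coe (hω f (mem_filter.1 hf).2), qmul, WithTop.map_coe, mul_comm]

variable (hfin) in
theorem mem_wPol_iff [DecidableEq D] {ω : Op D m → ℚ} :
    ω ∈ wPol Γ m ↔ ω ∈ weightingCone (Pol Γ m) {f | IsProj f} (indicatorMatrix Γ hfin m) := by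
  constructor
  · rintro ⟨⟨hsupp, hsum, hneg⟩, hΓ⟩
    refine ⟨fun f hf => not_imp_comm.1 (hsupp f) hf, fun f hf => not_lt.1 (mt (hneg f) hf), hsum,
      fun s => ?_⟩
    obtain ⟨hϱ, hxs⟩ := mem_indicatorConstraints.1 s.2
    exact_mod_cast wSum_eq_mulVec hsupp s ▸ hΓ _ hϱ _ hxs
  · rintro ⟨hF, hJ, hsum, hA⟩
    have hsupp : ∀ f, ω f ≠ 0 → f ∈ Pol Γ m := fun f => not_imp_comm.1 (hF f)
    refine ⟨⟨hsupp, hsum, fun f hf => not_not.1 fun h => (hJ f h).not_gt hf⟩, fun ϱ hϱ xs hxs => ?_⟩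
    rw [wSum_eq_mulVec (hfin := hfin) hsupp ⟨⟨ϱ, xs⟩, mem_indicatorConstraints.2 ⟨hϱ, hxs⟩⟩]
    exact_mod_cast hA _

variable (hfin) in
theorem mem_PolPlus_iff [DecidableEq D] {f : Op D m} : f ∈ PolPlus Γ m ↔
    IsProj f ∨
      ∃ x ∈ weightingCone (Pol Γ m) {f | IsProj f} (indicatorMatrix Γ hfin m), 0 < x f := by
  simp only [PolPlus, posClone, Set.mem_ofPred_eq, ← mem_wPol_iff hfin]

theorem mem_Pol_of_mem_PolPlus [DecidableEq D] {f : Op D m} (hf : f ∈ PolPlus Γ m) :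
    f ∈ Pol Γ m := by
  rcases hf with ⟨i, rfl⟩ | ⟨ω, hω, hpos⟩
  · exact proj_mem_Pol i
  · exact hω.1.support_mem f hpos.ne'

variable (Γ hfin m) in
/-- The indicator problem with constraint `s` scaled by `y s`. Its variables are the elements of
`D^m`, enumerated by `e`, so that an assignment is an `m`-ary operation. -/
noncomputable def indicatorInstance [DecidableEq D]
    (e : Fin (Fintype.card (Fin m → D)) ≃ (Fin m → D)) (y : indicatorConstraints Γ hfin m → ℚ)
    (hy : 0 ≤ y) :
    VInstance D (wRelClo Γ) (Fin (Fintype.card (Fin m → D))) where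
  cons := univ.val.map fun s =>
    ⟨s.1.1.1, (fun t => e.symm fun i => s.1.2 i t, fun z => qmul (y s) (s.1.1.2 z))⟩
  mem_lang := by
    simp only [Multiset.mem_map]
    rintro _ ⟨s, -, rfl⟩
    exact qmul_mem_wRelClo (mem_indicatorConstraints.1 s.2).1 (hy s)

variable [DecidableEq D] {e : Fin (Fintype.card (Fin m → D)) ≃ (Fin m → D)}
  {y : indicatorConstraints Γ hfin m → ℚ} {hy : 0 ≤ y}

theorem indicatorInstance_cost (f : Op D m) :
    (indicatorInstance Γ hfin m e y hy).cost (fun j => f (e j)) =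
      ∑ s, qmul (y s) (s.1.1.2 (appRows f s.1.2)) := by
  simp only [VInstance.cost, indicatorInstance, Multiset.map_map, Function.comp_def,
    Equiv.apply_symm_apply, sum_eq_multiset_sum]
  rfl

theorem indicatorInstance_cost_of_mem_Pol {f : Op D m} (hf : f ∈ Pol Γ m) :
    (indicatorInstance Γ hfin m e y hy).cost (fun j => f (e j)) =
      ((y ᵥ* indicatorMatrix Γ hfin m) f : WithTop ℚ) := by
  rw [indicatorInstance_cost, vecMul, dotProduct, WithTop.coe_sum]
  exact sum_congr rfl fun s _ => by rw [indicatorMatrix_coe hf, qmul, WithTop.map_coe]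

theorem indicatorInstance_cost_of_notMem_Pol {f : Op D m} (hf : f ∉ Pol Γ m) :
    (indicatorInstance Γ hfin m e y hy).cost (fun j => f (e j)) = ⊤ := by
  simp only [Pol, IsPolymorphism, Set.mem_ofPred_eq, not_forall] at hf
  obtain ⟨ϱ, hϱ, xs, hxs, hinf⟩ := hf
  rw [indicatorInstance_cost, WithTop.sum_eq_top]
  exact ⟨⟨⟨ϱ, xs⟩, mem_indicatorConstraints.2 ⟨hϱ, hxs⟩⟩, mem_univ _, by
    rw [not_not.1 hinf]; rfl⟩

end Indicator

theorem exists_costF_distinguishing_posClone_general {D : Type} [Fintype D] [DecidableEq D]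
    (Γ : VLang D) (hfin : Γ.Finite) (m : ℕ)
    (e : Fin (Fintype.card (Fin m → D)) ≃ (Fin m → D)) :
    ∃ (ϱ : CostF D (Fintype.card (Fin m → D))) (P : ℚ),
      (⟨Fintype.card (Fin m → D), ϱ⟩ : Σ r : ℕ, CostF D r) ∈ wRelClo Γ ∧
      ∀ f : Op D m,
        (P : WithTop ℚ) ≤ ϱ (fun j => f (e j)) ∧
        (ϱ (fun j => f (e j)) ≠ ⊤ ↔ f ∈ Pol Γ m) ∧
        (ϱ (fun j => f (e j)) = (P : WithTop ℚ) ↔ f ∈ PolPlus Γ m) := by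
  obtain ⟨y, hy, μ, hμ⟩ := exists_dual_of_weightingCone (A := indicatorMatrix Γ hfin m)
    (J := {f | IsProj f}) fun f ⟨i, hi⟩ => hi ▸ proj_mem_Pol i
  refine ⟨(indicatorInstance Γ hfin m e y hy).cost, μ,
    mem_wRelClo_of_expressible (VInstance.expressible_cost _), fun f => ?_⟩
  by_cases hf : f ∈ Pol Γ m
  · rw [indicatorInstance_cost_of_mem_Pol hf, WithTop.coe_inj, mem_PolPlus_iff hfin]
    exact ⟨WithTop.coe_le_coe.2 (hμ f hf).1, iff_of_true WithTop.coe_ne_top hf, (hμ f hf).2⟩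
  · rw [indicatorInstance_cost_of_notMem_Pol hf]
    exact ⟨le_top, iff_of_false (not_not.2 rfl) hf,
      iff_of_false WithTop.top_ne_coe (mt mem_Pol_of_mem_PolPlus hf)⟩

/-- For a finite core language `Γ` there is, for each `m`, a cost function in
`wRelClo(Γ)` of arity `|D^m|` (viewing `m`-ary operations as `|D^m|`-tuples via a fixed
enumeration `e` of `D^m`) which distinguishes `Pol_m(Γ)` and the positive clone. -/
theorem exists_costF_distinguishing_posClone {D : Type} [Fintype D] [DecidableEq D] [Nonempty D]
    (Γ : VLang D) (hfin : Γ.Finite) (hcore : IsCore Γ) (m : ℕ)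
    (e : Fin (Fintype.card (Fin m → D)) ≃ (Fin m → D)) :
    ∃ (ϱ : CostF D (Fintype.card (Fin m → D))) (P : ℚ),
      (⟨Fintype.card (Fin m → D), ϱ⟩ : Σ r : ℕ, CostF D r) ∈ wRelClo Γ ∧
      ∀ f : Op D m,
        (P : WithTop ℚ) ≤ ϱ (fun j => f (e j)) ∧
        (ϱ (fun j => f (e j)) ≠ ⊤ ↔ f ∈ Pol Γ m) ∧
        (ϱ (fun j => f (e j)) = (P : WithTop ℚ) ↔ f ∈ PolPlus Γ m) :=
  exists_costF_distinguishing_posClone_general Γ hfin m e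
end

section
/- Let Γ be a conservative valued constraint language over a finite set D. Then every weighted polymorphism of Γ is conservative, i.e., for every ω ∈ wPol(Γ), every operation in supp(ω) is a conservative operation. Consequently every operation in Pol⁺(Γ) other than a projection is conservative, the positive clone of Γ is idempotent, and Γ is a core. -/
/-- Every weighted polymorphism of a conservative language is conservative;
consequently every non-projection in `Pol⁺(Γ)` is conservative, the positive clone is
idempotent, and `Γ` is a core. -/
theorem conservative_weighted_polymorphisms {D : Type} [Fintype D] [DecidableEq D] [Nonempty D]
    (Γ : VLang D) (hcons : ConservativeLang Γ) :
    (∀ (k : ℕ), ∀ ω ∈ wPol Γ k, ∀ f : Op D k, 0 < ω f → Conservative f) ∧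
    (∀ (k : ℕ), ∀ f ∈ PolPlus Γ k, ¬ IsProj f → Conservative f) ∧
    (∀ (k : ℕ), ∀ f ∈ PolPlus Γ k, Idem f) ∧
    IsCore Γ := by
  classical
  have main : ∀ (k : ℕ), ∀ ω ∈ wPol Γ k, ∀ f : Op D k, 0 < ω f → Conservative f := by
    intro k ω hω f hf x
    set ϱ : CostF D 1 := fun y => if ∃ i : Fin k, y 0 = x i then (0 : WithTop ℚ) else 1 with hϱ
    have hϱΓ : (⟨1, ϱ⟩ : Σ r : ℕ, CostF D r) ∈ Γ := by
      apply hcons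
      intro y
      by_cases h : ∃ i : Fin k, y 0 = x i <;> simp [hϱ, h]
    set xs : Fin k → Fin 1 → D := fun i _ => x i with hxs
    have hfeas : ∀ i, xs i ∈ Feas ϱ := by
      intro i
      simp only [Feas, Set.mem_setOf_eq, hϱ]
      split <;> simp
    have hle := hω.2 ⟨1, ϱ⟩ hϱΓ xs hfeas
    set q : Op D k → ℚ := fun g => if ∃ i : Fin k, g x = x i then 0 else 1 with hq
    have hq0 : ∀ g : Op D k, (∃ i : Fin k, g x = x i) → q g = 0 := by
      intro g h; simp only [hq]; rw [if_pos h]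
    have hq1 : ∀ g : Op D k, ¬(∃ i : Fin k, g x = x i) → q g = 1 := by
      intro g h; simp only [hq]; rw [if_neg h]
    have hval : ∀ g : Op D k, qmul (ω g) (ϱ (appRows g xs)) = ((ω g * q g : ℚ) : WithTop ℚ) := by
      intro g
      have hval0 : ϱ (appRows g xs) = ((q g : ℚ) : WithTop ℚ) := by
        have h1 : ϱ (appRows g xs) = if ∃ i : Fin k, g x = x i then (0 : WithTop ℚ) else 1 := rfl
        rw [h1]
        by_cases h : ∃ i : Fin k, g x = x i
        · rw [if_pos h, hq0 g h]; simp
        · rw [if_neg h, hq1 g h]; simp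
      rw [hval0]
      rfl
    have hsum : wSum ω ϱ xs =
        (((∑ g ∈ Finset.univ.filter (fun g : Op D k => ω g ≠ 0), ω g * q g : ℚ)) : WithTop ℚ) := by
      rw [wSum]
      push_cast
      exact Finset.sum_congr rfl fun g _ => hval g
    rw [hsum] at hle
    have hle' : (∑ g ∈ Finset.univ.filter (fun g : Op D k => ω g ≠ 0), ω g * q g) ≤ 0 := by
      exact_mod_cast hle
    have hnonneg : ∀ g ∈ Finset.univ.filter (fun g : Op D k => ω g ≠ 0), 0 ≤ ω g * q g := by
      intro g _
      rcases lt_trichotomy (ω g) 0 with h | h | h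
      · obtain ⟨i, hi⟩ := hω.1.neg_imp_proj g h
        rw [hq0 g ⟨i, by rw [hi]; rfl⟩, mul_zero]
      · rw [h, zero_mul]
      · have : 0 ≤ q g := by
          by_cases hc : ∃ i : Fin k, g x = x i
          · rw [hq0 g hc]
          · rw [hq1 g hc]; norm_num
        exact mul_nonneg h.le this
    have hzero := (Finset.sum_eq_zero_iff_of_nonneg hnonneg).mp
      (le_antisymm hle' (Finset.sum_nonneg hnonneg))
    have hfmem : f ∈ Finset.univ.filter (fun g : Op D k => ω g ≠ 0) := by
      simp [hf.ne']
    have hfz := hzero f hfmem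
    by_contra hcon
    rw [hq1 f hcon, mul_one] at hfz
    exact hf.ne' hfz
  have hidem : ∀ (k : ℕ), ∀ f ∈ PolPlus Γ k, Idem f := by
    intro k f hf x
    rcases hf with ⟨i, hi⟩ | ⟨ω, hω, hpos⟩
    · rw [hi]; rfl
    · obtain ⟨i, hi⟩ := main k ω hω f hpos (fun _ => x)
      exact hi
  refine ⟨main, ?_, hidem, ?_⟩
  · intro k f hf hnp
    rcases hf with h | ⟨ω, hω, hpos⟩
    · exact absurd h hnp
    · exact main k ω hω f hpos
  · intro f hf
    have : unaryFun f = id := funext fun x => hidem 1 f hf x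
    rw [this]
    exact Function.bijective_id
end
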